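/- arXiv:1710.08236 — 6 statements merged into one kernel-verified Lean document; each statement's English description precedes it below -/
import Mathlib

section
/- If M is a matching in a finite simple graph G such that the subgraph G(M) of G induced by the set of vertices incident with an edge of M is a forest, then M is the unique perfect matching of G(M); in other words, every acyclic matching is a uniquely restricted matching. -/
/-!
Restricted to `G(M)`, any matching `M'` with the same vertex set as `M` becomes, like `M`, a
perfect matching of the forest `G(M)`. In the symmetric difference of two perfect matchings
every vertex has degree `0` or `2`, so each of its edges lies on a cycle; in a forest this forces
the symmetric difference to be empty.
-/

open SimpleGraph

namespace SimpleGraph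

variable {V : Type*} {G : SimpleGraph V}

open scoped symmDiff

lemma IsCycles.eq_bot_of_isAcyclic [Finite V] (hcyc : G.IsCycles) (hac : G.IsAcyclic) :
    G = ⊥ := by
  ext v w
  refine ⟨fun hadj ↦ ?_, fun h ↦ h.elim⟩
  exact isBridge_iff.mp (isAcyclic_iff_forall_adj_isBridge.mp hac hadj)
    (hcyc.reachable_deleteEdges hadj)

lemma IsAcyclic.isPerfectMatching_unique [Finite V] (hac : G.IsAcyclic) {M M' : G.Subgraph}
    (hM : M.IsPerfectMatching) (hM' : M'.IsPerfectMatching) : M = M' := by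
  have hsymm : M.spanningCoe ∆ M'.spanningCoe = ⊥ :=
    (hM.symmDiff_isCycles hM').eq_bot_of_isAcyclic <|
      hac.anti <| symmDiff_le_sup.trans (sup_le M.spanningCoe_le M'.spanningCoe_le)
  exact Subgraph.ext (hM.2.verts_eq_univ.trans hM'.2.verts_eq_univ.symm)
    (Subgraph.spanningCoe_inj.mp (symmDiff_eq_bot.mp hsymm))

namespace Subgraph

variable {M M' : G.Subgraph} {s : Set V}

lemma IsMatching.isPerfectMatching_comap_induce (hM : M.IsMatching) (hs : M.verts = s) :
    (M.comap (Embedding.induce s).toHom).IsPerfectMatching := by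
  subst hs
  refine isPerfectMatching_iff.mpr fun v ↦ ?_
  obtain ⟨w, hvw, huniq⟩ := hM v.2
  exact ⟨⟨w, M.edge_vert hvw.symm⟩, ⟨M.adj_sub hvw, hvw⟩,
    fun u hu ↦ Subtype.ext (huniq u hu.2)⟩

lemma comap_induce_adj_iff {v w : V} (hv : v ∈ s) (hw : w ∈ s) :
    (M.comap (Embedding.induce s).toHom).Adj ⟨v, hv⟩ ⟨w, hw⟩ ↔ M.Adj v w :=
  ⟨And.right, fun h ↦ ⟨M.adj_sub h, h⟩⟩

lemma adj_of_comap_induce_le (hM : M.verts = s)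
    (h : M.comap (Embedding.induce s).toHom ≤ M'.comap (Embedding.induce s).toHom) {v w : V}
    (hvw : M.Adj v w) : M'.Adj v w := by
  have hv : v ∈ s := hM ▸ M.edge_vert hvw
  have hw : w ∈ s := hM ▸ M.edge_vert hvw.symm
  exact (comap_induce_adj_iff hv hw).mp (h.2 ((comap_induce_adj_iff hv hw).mpr hvw))

lemma eq_of_comap_induce_eq (hM : M.verts = s) (hM' : M'.verts = s)
    (h : M.comap (Embedding.induce s).toHom = M'.comap (Embedding.induce s).toHom) : M = M' :=
  Subgraph.ext (hM.trans hM'.symm) <| funext₂ fun _ _ ↦ propext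
    ⟨adj_of_comap_induce_le hM h.le, adj_of_comap_induce_le hM' h.ge⟩

end Subgraph

end SimpleGraph

/-- If `M` is a matching in a finite simple graph `G` such that the
subgraph `G(M)` of `G` induced by the vertex set `M.verts` of `M` is a forest (acyclic),
then `M` is the unique perfect matching of `G(M)`: any matching `M'` of `G` whose vertex
set is exactly `M.verts` (i.e. any perfect matching of `G(M)`) coincides with `M`.
In other words, every acyclic matching is uniquely restricted. -/
theorem acyclic_matching_is_uniquely_restricted {V : Type*} [Fintype V]
    (G : SimpleGraph V) (M : G.Subgraph) (hM : M.IsMatching)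
    (hac : (G.induce M.verts).IsAcyclic) :
    ∀ M' : G.Subgraph, M'.IsMatching → M'.verts = M.verts → M' = M := by
  intro M' hM' hverts
  exact Subgraph.eq_of_comap_induce_eq hverts rfl <|
    hac.isPerfectMatching_unique (hM'.isPerfectMatching_comap_induce hverts)
      (hM.isPerfectMatching_comap_induce rfl)
end

section
/- Let G be a finite simple graph. Every maximum matching in G is induced if and only if every connected component of G is a star or a triangle. -/
open SimpleGraph

/-- A matching `M` in `G` is a *maximum matching* if no matching of `G` has more edges. -/
def IsMaximumMatching {V : Type*} (G : SimpleGraph V) (M : G.Subgraph) : Prop :=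
  M.IsMatching ∧ ∀ M' : G.Subgraph, M'.IsMatching → M'.edgeSet.ncard ≤ M.edgeSet.ncard

/-- A matching `M` in `G` is *induced* if the subgraph `G(M)` of `G` induced by the
vertices covered by `M` is `1`-regular, i.e. every vertex of `G(M)` has exactly one
neighbour in `G(M)`. -/
def IsInducedMatching {V : Type*} (G : SimpleGraph V) (M : G.Subgraph) : Prop :=
  M.IsMatching ∧ ∀ v : M.verts, ∃! w : M.verts, (G.induce M.verts).Adj v w


/-!
Both conditions say that `G` contains no path on four vertices, induced or not.

If every maximum matching is induced and `a - b - c - d` is such a path, exchanging edges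
produces a maximum matching containing `bc`; inducedness leaves `a` and `d` uncovered, so
trading `bc` for `cd` gives a maximum matching missing both ends of `ab`, which could be
augmented. A connected graph with no such path is a star, or a triangle if it has one.

Conversely, stars and triangles contain no such path, while a matching that is not induced
has two edges `vw`, `w'x` with `v` adjacent to `w'`, and `w - v - w' - x` is one.
-/

namespace SimpleGraph

variable {V W : Type*} {G : SimpleGraph V} {H : SimpleGraph W}

/-- `a - b - c - d` is a path on four distinct vertices; further edges among them are allowed. -/
def IsPathFour (G : SimpleGraph V) (a b c d : V) : Prop :=
  G.Adj a b ∧ G.Adj b c ∧ G.Adj c d ∧ a ≠ c ∧ b ≠ d ∧ a ≠ d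

def PathFourFree (G : SimpleGraph V) : Prop :=
  ∀ a b c d, ¬G.IsPathFour a b c d

lemma Embedding.isPathFour_map_iff (f : G ↪g H) {a b c d : V} :
    H.IsPathFour (f a) (f b) (f c) (f d) ↔ G.IsPathFour a b c d := by
  simp only [IsPathFour, f.map_adj_iff, f.injective.ne_iff]

lemma PathFourFree.comap (f : G ↪g H) (h : H.PathFourFree) : G.PathFourFree :=
  fun _ _ _ _ hP ↦ h _ _ _ _ (f.isPathFour_map_iff.mpr hP)

lemma pathFourFree_starGraph (r : W) : (starGraph r).PathFourFree := by
  rintro a b c d ⟨hab, hbc, hcd, hac, hbd, -⟩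
  simp only [starGraph_adj] at hab hbc hcd
  grind

lemma pathFourFree_top_fin_three : (⊤ : SimpleGraph (Fin 3)).PathFourFree := by
  unfold PathFourFree IsPathFour
  decide

lemma completeBipartiteGraph_fin_one_eq_starGraph (k : ℕ) :
    completeBipartiteGraph (Fin 1) (Fin k) = starGraph (.inl 0) := by
  ext x y
  rcases x with x | x <;> rcases y with y | y <;> simp [Fin.fin_one_eq_zero]

lemma exists_starGraph_iso_completeBipartiteGraph [Finite W] (r : W) :
    ∃ k, Nonempty (starGraph r ≃g completeBipartiteGraph (Fin 1) (Fin k)) := by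
  classical
  let e : W ≃ Fin 1 ⊕ Fin (Nat.card {w // ¬w = r}) :=
    (Equiv.sumCompl (· = r)).symm.trans
      (Equiv.sumCongr (Equiv.ofUnique _ _) (Finite.equivFinOfCardEq rfl))
  have he : e r = .inl 0 := by simp [e, Equiv.sumCompl_symm_apply_of_pos]
  refine ⟨Nat.card {w // ¬w = r}, ⟨?_⟩⟩
  rw [completeBipartiteGraph_fin_one_eq_starGraph, ← he]
  exact ⟨e, by simp [e.injective.eq_iff]⟩

lemma Connected.mem_of_adj_closed (hH : H.Connected) {S : Set W}
    (hS : ∀ ⦃x y⦄, H.Adj x y → x ∈ S → y ∈ S) {v : W} (hv : v ∈ S) (w : W) : w ∈ S := by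
  obtain ⟨p⟩ := hH.preconnected v w
  induction p with
  | nil => exact hv
  | cons h _ ih => exact ih (hS h hv)

lemma Connected.adj_of_forall_adj_adj_eq (hH : H.Connected) {r : W}
    (hr : ∀ t, H.Adj r t → ∀ y, H.Adj t y → y = r) {w : W} (hw : w ≠ r) : H.Adj r w := by
  refine (hH.mem_of_adj_closed (S := {w | w = r ∨ H.Adj r w}) ?_ (.inl rfl) w).resolve_left hw
  rintro x y hxy (rfl | hrx)
  exacts [.inr hxy, .inl (hr x hrx y hxy)]

lemma eq_starGraph_of_cliqueFree_three (h3 : H.CliqueFree 3) {r : W}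
    (hr : ∀ w, w ≠ r → H.Adj r w) : H = starGraph r := by
  classical
  ext x y
  rw [starGraph_adj]
  constructor
  · refine fun hxy ↦ ⟨hxy.ne, ?_⟩
    by_contra! hne
    exact h3 _ (is3Clique_triple_iff.mpr ⟨hr x hne.1, hr y hne.2, hxy⟩)
  · rintro ⟨hxy, rfl | rfl⟩
    · exact hr y hxy.symm
    · exact (hr x hxy).symm

lemma PathFourFree.exists_eq_starGraph (h : H.PathFourFree) (hH : H.Connected)
    (h3 : H.CliqueFree 3) : ∃ r, H = starGraph r := by
  classical
  obtain ⟨v⟩ := hH.nonempty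
  by_cases hv : ∀ t, H.Adj v t → ∀ y, H.Adj t y → y = v
  · exact ⟨v, eq_starGraph_of_cliqueFree_three h3 fun _ ↦ hH.adj_of_forall_adj_adj_eq hv⟩
  push Not at hv
  obtain ⟨t, hvt, y, hty, hyv⟩ := hv
  -- a second neighbour `y` of `t` makes `t` the centre: anything at distance two from `t`
  -- would close either a path on four vertices or a triangle
  refine ⟨t, eq_starGraph_of_cliqueFree_three h3 fun _ ↦ hH.adj_of_forall_adj_adj_eq ?_⟩
  intro s hts q hsq
  by_contra hqt
  by_cases hsv : s = v
  · subst hsv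
    by_cases hqy : q = y
    · subst hqy
      exact h3 _ (is3Clique_triple_iff.mpr ⟨hvt, hsq, hty⟩)
    · exact h q s t y ⟨hsq.symm, hts.symm, hty, hqt, hyv.symm, hqy⟩
  · by_cases hqv : q = v
    · subst hqv
      exact h3 _ (is3Clique_triple_iff.mpr ⟨hvt, hsq.symm, hts⟩)
    · exact h v t s q ⟨hvt, hts, hsq, Ne.symm hsv, Ne.symm hqt, Ne.symm hqv⟩

lemma PathFourFree.eq_top_of_not_cliqueFree_three (h : H.PathFourFree) (hH : H.Connected)
    (h3 : ¬H.CliqueFree 3) : H = ⊤ ∧ Nat.card W = 3 := by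
  classical
  obtain ⟨s, hs⟩ := not_forall_not.mp h3
  obtain ⟨x, y, z, hxy, hxz, hyz, -⟩ := is3Clique_iff.mp hs
  have hclosed : ∀ ⦃p q⦄, H.Adj p q → p ∈ ({x, y, z} : Set W) → q ∈ ({x, y, z} : Set W) := by
    rintro p q hpq hp
    by_contra hq
    simp only [Set.mem_insert_iff, Set.mem_singleton_iff, not_or] at hq
    obtain ⟨hqx, hqy, hqz⟩ := hq
    rcases hp with rfl | rfl | rfl
    · exact h q p y z ⟨hpq.symm, hxy, hyz, hqy, hxz.ne, hqz⟩
    · exact h q p x z ⟨hpq.symm, hxy.symm, hxz, hqx, hyz.ne, hqz⟩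
    · exact h q p x y ⟨hpq.symm, hxz.symm, hxy, hqx, hyz.ne', hqy⟩
  have hmem := hH.mem_of_adj_closed hclosed (.inl rfl)
  refine ⟨?_, ?_⟩
  · ext u v
    refine ⟨Adj.ne, fun huv ↦ ?_⟩
    rcases hmem u with rfl | rfl | rfl <;> rcases hmem v with rfl | rfl | rfl <;>
      first | exact absurd rfl huv | assumption | exact Adj.symm ‹_›
  · rw [← Set.ncard_univ, Set.ncard_eq_three]
    exact ⟨x, y, z, hxy.ne, hxz.ne, hyz.ne, (Set.eq_univ_of_forall hmem).symm⟩

theorem PathFourFree.eq_starGraph_or_eq_top (h : H.PathFourFree) (hH : H.Connected) :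
    (∃ r, H = starGraph r) ∨ (H = ⊤ ∧ Nat.card W = 3) := by
  by_cases h3 : H.CliqueFree 3
  exacts [.inl (h.exists_eq_starGraph hH h3), .inr (h.eq_top_of_not_cliqueFree_three hH h3)]

lemma pathFourFree_of_forall_connectedComponent
    (h : ∀ c : G.ConnectedComponent, (G.induce c.supp).PathFourFree) : G.PathFourFree := by
  intro a b c d hP
  have mem : ∀ {x}, G.Reachable a x → x ∈ (G.connectedComponentMk a).supp :=
    fun hx ↦ (ConnectedComponent.eq.mpr hx).symm
  have ⟨hab, hbc, hcd, _⟩ := hP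
  have hac := hab.reachable.trans hbc.reachable
  exact h _ ⟨a, mem .rfl⟩ ⟨b, mem hab.reachable⟩ ⟨c, mem hac⟩ ⟨d, mem (hac.trans hcd.reachable)⟩
    ((Embedding.induce _).isPathFour_map_iff.mp hP)

end SimpleGraph

namespace SimpleGraph.Subgraph

variable {V : Type*} {G : SimpleGraph V} {M : G.Subgraph} {u v w : V}

lemma IsMatching.sup_subgraphOfAdj (hM : M.IsMatching) (huw : G.Adj u w) (hu : u ∉ M.verts)
    (hw : w ∉ M.verts) : (M ⊔ G.subgraphOfAdj huw).IsMatching := by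
  refine hM.sup (.subgraphOfAdj huw) ?_
  rw [support_subgraphOfAdj, Set.disjoint_right]
  rintro x (rfl | rfl) hx <;> exact ‹_ ∉ M.verts› (M.support_subset_verts hx)

lemma ncard_edgeSet_sup_subgraphOfAdj [Finite V] (huw : G.Adj u w) (hu : u ∉ M.verts) :
    (M ⊔ G.subgraphOfAdj huw).edgeSet.ncard = M.edgeSet.ncard + 1 := by
  have hnew : s(u, w) ∉ M.edgeSet := fun h ↦ hu (M.edge_vert h)
  rw [Subgraph.edgeSet_sup, edgeSet_subgraphOfAdj, Set.union_singleton,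
    Set.ncard_insert_of_notMem hnew (Set.toFinite _)]

lemma IsMatching.deleteVerts_pair (hM : M.IsMatching) (huv : M.Adj u v) :
    (M.deleteVerts {u, v}).IsMatching := by
  rintro x ⟨hx, hxuv⟩
  obtain ⟨y, hxy, hy⟩ := hM hx
  have hyuv : y ∉ ({u, v} : Set V) := by
    rintro (rfl | rfl)
    · exact hxuv (.inr (hM.eq_of_adj_right hxy huv.symm))
    · exact hxuv (.inl (hM.eq_of_adj_right hxy huv))
  exact ⟨y, deleteVerts_adj.mpr ⟨hx, hxuv, M.edge_vert hxy.symm, hyuv, hxy⟩,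
    fun z hz ↦ hy z (deleteVerts_adj.mp hz).2.2.2.2⟩

lemma IsMatching.edgeSet_deleteVerts_pair (hM : M.IsMatching) (huv : M.Adj u v) :
    (M.deleteVerts {u, v}).edgeSet = M.edgeSet \ {s(u, v)} := by
  ext e
  refine Sym2.ind (fun x y ↦ ?_) e
  simp only [Subgraph.mem_edgeSet, deleteVerts_adj, Set.mem_sdiff, Set.mem_singleton_iff,
    Set.mem_insert_iff, Sym2.eq, Sym2.rel_iff']
  grind [Adj.fst_mem, Adj.snd_mem, Adj.symm, IsMatching.eq_of_adj_left, IsMatching.eq_of_adj_right]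

end SimpleGraph.Subgraph

section Matchings

open Subgraph

variable {V : Type*} {G : SimpleGraph V} {M : G.Subgraph} {u v w : V}

lemma exists_isMaximumMatching [Finite V] (G : SimpleGraph V) : ∃ M, IsMaximumMatching G M := by
  obtain ⟨M, hM, hmax⟩ := Set.exists_max_image {M : G.Subgraph | M.IsMatching}
    (fun M ↦ M.edgeSet.ncard) (Set.toFinite _) ⟨⊥, fun _ h ↦ h.elim⟩
  exact ⟨M, hM, hmax⟩

lemma IsMaximumMatching.not_adj [Finite V] (hM : IsMaximumMatching G M) (hu : u ∉ M.verts)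
    (hw : w ∉ M.verts) : ¬G.Adj u w := fun huw ↦ by
  have := hM.2 _ (hM.1.sup_subgraphOfAdj huw hu hw)
  rw [ncard_edgeSet_sup_subgraphOfAdj huw hu] at this
  omega

lemma IsMaximumMatching.exchange [Finite V] (hM : IsMaximumMatching G M) (huv : M.Adj u v)
    (huw : G.Adj u w) (hw : w ∉ M.verts) :
    ∃ N, IsMaximumMatching G N ∧ N.Adj u w ∧ N.verts = insert w (M.verts \ {v}) := by
  set M₀ := M.deleteVerts {u, v}
  have hu : u ∉ M₀.verts := fun h ↦ h.2 (.inl rfl)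
  have hw₀ : w ∉ M₀.verts := fun h ↦ hw h.1
  have hcard : (M₀ ⊔ G.subgraphOfAdj huw).edgeSet.ncard = M.edgeSet.ncard := by
    rw [ncard_edgeSet_sup_subgraphOfAdj huw hu, hM.1.edgeSet_deleteVerts_pair huv,
      Set.ncard_sdiff_singleton_add_one (show s(u, v) ∈ M.edgeSet from huv) (Set.toFinite _)]
  refine ⟨M₀ ⊔ G.subgraphOfAdj huw,
    ⟨(hM.1.deleteVerts_pair huv).sup_subgraphOfAdj huw hu hw₀, hcard ▸ hM.2⟩,
    .inr (subgraphOfAdj_adj_self huw), ?_⟩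
  ext x
  simp only [M₀, verts_sup, deleteVerts_verts, subgraphOfAdj_verts, Set.mem_union,
    Set.mem_sdiff, Set.mem_insert_iff, Set.mem_singleton_iff]
  have huM : u ∈ M.verts := M.edge_vert huv
  grind [huv.ne]

lemma IsInducedMatching.eq_of_adj (hM : IsInducedMatching G M) (huv : M.Adj u v)
    (huw : G.Adj u w) (hw : w ∈ M.verts) : w = v := by
  obtain ⟨x, -, hx⟩ := hM.2 ⟨u, M.edge_vert huv⟩
  exact congrArg Subtype.val
    ((hx ⟨w, hw⟩ huw).trans (hx ⟨v, M.edge_vert huv.symm⟩ (M.adj_sub huv)).symm)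

lemma isInducedMatching_of_pathFourFree (h : G.PathFourFree) (hM : M.IsMatching) :
    IsInducedMatching G M := by
  refine ⟨hM, fun ⟨v, hv⟩ ↦ ?_⟩
  obtain ⟨w, hvw, -⟩ := hM hv
  refine ⟨⟨w, M.edge_vert hvw.symm⟩, M.adj_sub hvw, ?_⟩
  rintro ⟨w', hw'⟩ (hvw' : G.Adj v w')
  obtain ⟨x, hw'x, -⟩ := hM hw'
  by_contra hne
  have hww' : w ≠ w' := fun h ↦ hne (Subtype.ext h.symm)
  refine h w v w' x ⟨(M.adj_sub hvw).symm, hvw', M.adj_sub hw'x, hww', ?_, ?_⟩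
  · rintro rfl
    exact hww' (hM.eq_of_adj_left hvw hw'x.symm)
  · rintro rfl
    exact hvw'.ne (hM.eq_of_adj_right hvw hw'x)

lemma exists_isMaximumMatching_adj [Finite V]
    (hind : ∀ M, IsMaximumMatching G M → IsInducedMatching G M) (huv : G.Adj u v) :
    ∃ N, IsMaximumMatching G N ∧ N.Adj u v := by
  obtain ⟨M, hM⟩ := exists_isMaximumMatching G
  have of_mem : ∀ {x y}, G.Adj x y → x ∈ M.verts → ∃ N, IsMaximumMatching G N ∧ N.Adj x y := by
    intro x y hxy hx
    obtain ⟨x', hxx', -⟩ := hM.1 hx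
    by_cases hy : y ∈ M.verts
    · exact ⟨M, hM, (hind M hM).eq_of_adj hxx' hxy hy ▸ hxx'⟩
    · obtain ⟨N, hN, hNxy, -⟩ := hM.exchange hxx' hxy hy
      exact ⟨N, hN, hNxy⟩
  by_cases hu : u ∈ M.verts
  · exact of_mem huv hu
  by_cases hv : v ∈ M.verts
  · obtain ⟨N, hN, hNvu⟩ := of_mem huv.symm hv
    exact ⟨N, hN, hNvu.symm⟩
  exact absurd huv (hM.not_adj hu hv)

theorem pathFourFree_of_forall_isInducedMatching [Finite V]
    (hind : ∀ M, IsMaximumMatching G M → IsInducedMatching G M) : G.PathFourFree := by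
  rintro a b c d ⟨hab, hbc, hcd, hac, hbd, had⟩
  obtain ⟨N, hN, hNbc⟩ := exists_isMaximumMatching_adj hind hbc
  have ha : a ∉ N.verts := fun ha ↦ hac ((hind N hN).eq_of_adj hNbc hab.symm ha)
  have hd : d ∉ N.verts := fun hd ↦ hbd ((hind N hN).eq_of_adj hNbc.symm hcd hd).symm
  obtain ⟨N', hN', -, hverts⟩ := hN.exchange hNbc.symm hcd hd
  exact hN'.not_adj (by simp [hverts, had, ha]) (by simp [hverts, hbd]) hab

end Matchings

/-- For a finite simple graph `G`, every maximum matching in `G` is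
induced if and only if every connected component of `G` is a star `K_{1,k}`
(for some `k ≥ 0`) or a triangle `K_3`. -/
theorem every_maximumMatching_induced_iff {V : Type*} [Fintype V] (G : SimpleGraph V) :
    (∀ M : G.Subgraph, IsMaximumMatching G M → IsInducedMatching G M) ↔
      (∀ c : G.ConnectedComponent,
        (∃ k : ℕ, Nonempty ((G.induce c.supp) ≃g completeBipartiteGraph (Fin 1) (Fin k))) ∨
          Nonempty ((G.induce c.supp) ≃g (⊤ : SimpleGraph (Fin 3)))) := by
  constructor
  · intro hind c
    have hfree := (pathFourFree_of_forall_isInducedMatching hind).comap (Embedding.induce c.supp)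
    rcases hfree.eq_starGraph_or_eq_top c.connected_toSimpleGraph with ⟨r, hr⟩ | ⟨htop, hcard⟩
    · exact .inl (hr ▸ exists_starGraph_iso_completeBipartiteGraph r)
    · exact .inr (htop ▸ ⟨Iso.completeGraph (Finite.equivFinOfCardEq hcard)⟩)
  · intro h M hM
    refine isInducedMatching_of_pathFourFree
      (pathFourFree_of_forall_connectedComponent fun c ↦ ?_) hM.1
    rcases h c with ⟨k, ⟨e⟩⟩ | ⟨⟨e⟩⟩
    · exact (completeBipartiteGraph_fin_one_eq_starGraph k ▸ pathFourFree_starGraph _).comap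
        e.toEmbedding
    · exact pathFourFree_top_fin_three.comap e.toEmbedding
end

section
/- If G is a finite simple graph containing no induced subgraph isomorphic to 2P_3 (the disjoint union of two paths on three vertices), and M is an acyclic matching in G, then at most one connected component of the induced subgraph G(M) is not isomorphic to K_2. -/
/-!
Every vertex of `G(M)` is matched, so each component of the forest `G(M)` contains an edge `vw`.
If the component is not `K₂` it has a third vertex, and then some vertex `y` of it has two
distinct neighbours `a, b`; as a forest has no triangles, `a - y - b` is an induced `P₃`.
Induced `P₃`s in two different components are disjoint and mutually non-adjacent, so together
they form an induced `2P₃`.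
-/

open SimpleGraph

/-- A graph `G` is *2P₃-free* if it contains no induced subgraph isomorphic to the
disjoint union of two paths on three vertices.  (Graph embeddings `↪g` are exactly
induced-subgraph copies.) -/
def TwoP3Free {V : Type*} (G : SimpleGraph V) : Prop :=
  IsEmpty ((pathGraph 3 ⊕g pathGraph 3) ↪g G)

namespace SimpleGraph

variable {V : Type*} {H : SimpleGraph V}

theorem IsAcyclic.cliqueFree_three (h : H.IsAcyclic) : H.CliqueFree 3 := by
  classical
  intro s hs
  obtain ⟨a, b, c, hab, hac, hbc, rfl⟩ := is3Clique_iff.mp hs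
  refine h _ (?_ : (Walk.cons hab (Walk.cons hbc (Walk.cons hac.symm Walk.nil))).IsCycle)
  simp [Walk.isCycle_def, Walk.isTrail_def, hab.ne, hbc.ne, hac.ne, hab.ne', hac.ne']

theorem exists_adj_adj_ne_of_reachable {u v w : V} (huv : u ≠ v) (huw : u ≠ w)
    (hvw : H.Adj v w) (hr : H.Reachable u v) :
    ∃ y a b, H.Adj y a ∧ H.Adj y b ∧ a ≠ b ∧ H.Reachable u y := by
  classical
  obtain ⟨p, hp⟩ := hr.some.toPath
  cases p with
  | nil => exact absurd rfl huv
  | @cons _ m _ hum q =>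
    cases q with
    | nil => exact ⟨v, u, w, hum.symm, hvw, huw, hum.reachable⟩
    | @cons _ m' _ hmm' q' =>
      have hum' : u ≠ m' := by
        rintro rfl
        exact ((Walk.cons_isPath_iff _ _).mp hp).2 (by simp)
      exact ⟨m, u, m', hum.symm, hmm', hum', hum.reachable⟩

theorem nonempty_induce_iso_top_fin_two {s : Set V} {v w : V} (hvw : H.Adj v w)
    (hs : s = {v, w}) : Nonempty (H.induce s ≃g (⊤ : SimpleGraph (Fin 2))) := by
  subst hs
  have htop : H.induce {v, w} = ⊤ := by
    ext ⟨x, hx⟩ ⟨y, hy⟩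
    rcases hx with rfl | rfl <;> rcases hy with rfl | rfl <;>
      simp [hvw, hvw.symm, hvw.ne, hvw.ne', ← Subtype.val_inj]
  rw [htop]
  exact ⟨Iso.completeGraph <| Finite.equivFinOfCardEq <| by
    rw [Nat.card_coe_set_eq, Set.ncard_pair hvw.ne]⟩

def Embedding.pathGraphThree {a y b : V} (hya : H.Adj y a) (hyb : H.Adj y b) (hab : a ≠ b)
    (hnab : ¬ H.Adj a b) : pathGraph 3 ↪g H where
  toFun := ![a, y, b]
  inj' := by
    intro i j hij
    fin_cases i <;> fin_cases j <;> simp_all [hya.ne, hyb.ne, hya.ne', hyb.ne']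
  map_rel_iff' := by
    intro i j
    change H.Adj (![a, y, b] i) (![a, y, b] j) ↔ _
    fin_cases i <;> fin_cases j <;> simp_all [pathGraph_adj, adj_comm]

def Embedding.sumInduceSupp {c c' : H.ConnectedComponent} (h : c ≠ c') :
    H.induce c.supp ⊕g H.induce c'.supp ↪g H where
  toFun := Sum.elim Subtype.val Subtype.val
  inj' := by
    rintro (⟨x, hx⟩ | ⟨x, hx⟩) (⟨y, hy⟩ | ⟨y, hy⟩) hxy <;>
      simp only [Sum.elim_inl, Sum.elim_inr] at hxy <;> subst hxy
    · rfl
    · exact absurd (hx.symm.trans hy) h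
    · exact absurd (hy.symm.trans hx) h
    · rfl
  map_rel_iff' := by
    have hsep : ∀ x ∈ c.supp, ∀ y ∈ c'.supp, ¬ H.Adj x y := fun x hx y hy hxy ↦
      h (hx.symm.trans ((ConnectedComponent.connectedComponentMk_eq_of_adj hxy).trans hy))
    rintro (⟨x, hx⟩ | ⟨x, hx⟩) (⟨y, hy⟩ | ⟨y, hy⟩)
    · exact Iff.rfl
    · exact iff_of_false (hsep x hx y hy) (by simp)
    · exact iff_of_false (fun hxy ↦ hsep y hy x hx hxy.symm) (by simp)
    · exact Iff.rfl

theorem ConnectedComponent.nonempty_pathGraph_three_embedding (hH : H.CliqueFree 3)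
    (hdeg : ∀ v, ∃ w, H.Adj v w) {c : H.ConnectedComponent}
    (hc : ¬ Nonempty (H.induce c.supp ≃g (⊤ : SimpleGraph (Fin 2)))) :
    Nonempty (pathGraph 3 ↪g H.induce c.supp) := by
  classical
  obtain ⟨v, rfl⟩ := c.exists_rep
  obtain ⟨w, hvw⟩ := hdeg v
  obtain ⟨u, hu, huv, huw⟩ : ∃ u ∈ (H.connectedComponentMk v).supp, u ≠ v ∧ u ≠ w := by
    by_contra! hsupp
    refine hc (nonempty_induce_iso_top_fin_two hvw (Set.eq_of_subset_of_subset ?_ ?_))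
    · intro x hx
      by_cases hxv : x = v
      · exact .inl hxv
      · exact .inr (hsupp x hx hxv)
    · rintro x (rfl | rfl)
      · rfl
      · exact ConnectedComponent.connectedComponentMk_eq_of_adj hvw.symm
  obtain ⟨y, a, b, hya, hyb, hab, huy⟩ :=
    exists_adj_adj_ne_of_reachable huv huw hvw (ConnectedComponent.exact hu)
  have hy : y ∈ (H.connectedComponentMk v).supp := (ConnectedComponent.sound huy).symm.trans hu
  have hnab : ¬ H.Adj a b := fun hab' ↦ hH {y, a, b} (is3Clique_triple_iff.mpr ⟨hya, hyb, hab'⟩)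
  exact ⟨Embedding.pathGraphThree (H := H.induce _)
    (a := ⟨a, (ConnectedComponent.connectedComponentMk_eq_of_adj hya).symm.trans hy⟩)
    (y := ⟨y, hy⟩)
    (b := ⟨b, (ConnectedComponent.connectedComponentMk_eq_of_adj hyb).symm.trans hy⟩)
    hya hyb (fun h ↦ hab (congrArg Subtype.val h)) hnab⟩

theorem Subgraph.IsMatching.exists_induce_verts_adj {G : SimpleGraph V} {M : G.Subgraph}
    (hM : M.IsMatching) (v : M.verts) : ∃ w, (G.induce M.verts).Adj v w := by
  obtain ⟨w, hvw, -⟩ := hM v.2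
  exact ⟨⟨w, M.edge_vert hvw.symm⟩, M.adj_sub hvw⟩

end SimpleGraph

theorem twoP3Free_acyclicMatching_at_most_one_nonK2_component_general {V : Type*}
    (G : SimpleGraph V) (hfree : TwoP3Free G) (M : G.Subgraph) (hM : M.IsMatching)
    (hac : (G.induce M.verts).IsAcyclic) :
    ∀ c c' : (G.induce M.verts).ConnectedComponent,
      ¬ Nonempty (((G.induce M.verts).induce c.supp) ≃g (⊤ : SimpleGraph (Fin 2))) →
      ¬ Nonempty (((G.induce M.verts).induce c'.supp) ≃g (⊤ : SimpleGraph (Fin 2))) →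
      c = c' := by
  intro c c' hc hc'
  by_contra hne
  obtain ⟨f⟩ := ConnectedComponent.nonempty_pathGraph_three_embedding
    hac.cliqueFree_three hM.exists_induce_verts_adj hc
  obtain ⟨g⟩ := ConnectedComponent.nonempty_pathGraph_three_embedding
    hac.cliqueFree_three hM.exists_induce_verts_adj hc'
  exact hfree.false ((Embedding.induce M.verts).comp ((Embedding.sumInduceSupp hne).comp (f.sum g)))

/-- If `G` is a finite simple `2P₃`-free graph and `M` is an acyclic
matching in `G`, then at most one connected component of the induced subgraph `G(M)`
is not isomorphic to `K₂`. -/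
theorem twoP3Free_acyclicMatching_at_most_one_nonK2_component {V : Type*} [Fintype V]
    (G : SimpleGraph V) (hfree : TwoP3Free G) (M : G.Subgraph) (hM : M.IsMatching)
    (hac : (G.induce M.verts).IsAcyclic) :
    ∀ c c' : (G.induce M.verts).ConnectedComponent,
      ¬ Nonempty (((G.induce M.verts).induce c.supp) ≃g (⊤ : SimpleGraph (Fin 2))) →
      ¬ Nonempty (((G.induce M.verts).induce c'.supp) ≃g (⊤ : SimpleGraph (Fin 2))) →
      c = c' :=
  twoP3Free_acyclicMatching_at_most_one_nonK2_component_general G hfree M hM hac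
end

section
/- If G is a finite simple 2P_3-free graph, M is an acyclic matching in G, and T is a connected component of G(M) that is not isomorphic to K_2 and in which a longest path has exactly 4 vertices, then T is isomorphic to the path P_4 on four vertices. -/
/-!
Write a longest path of the component as `u x₁ x₂ v`. The component is a tree on which `M`
restricts to a perfect matching. In a forest without longer paths, every neighbour of an end
of a longest path is its second vertex, so `u` and `v` are leaves and hence matched to `x₁`
and `x₂`. A neighbour `y ≠ x₂` of `x₁` would start another longest path `y x₁ x₂ v`, so `y`
would be a leaf matched to `x₁`, i.e. `y = u`. Thus no edge leaves the path `u x₁ x₂ v`, and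
by connectedness it is the whole component.
-/

open SimpleGraph

namespace SimpleGraph

variable {V : Type*} {G : SimpleGraph V} {n : ℕ}

theorem IsAcyclic.eq_snd_of_adj_start_of_longest (hac : G.IsAcyclic)
    (hmax : ∀ (u v : V) (p : G.Walk u v), p.IsPath → p.length ≤ n) {u v w : V}
    {p : G.Walk u v} (hp : p.IsPath) (hlen : p.length = n) (hadj : G.Adj u w) :
    w = p.snd := by
  by_contra hw
  have hwp : w ∉ p.support := fun hmem => hw (hac.eq_snd_of_adj_start hp hadj hmem)
  have := hmax w v (.cons hadj.symm p) (hp.cons hwp)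
  simp [hlen] at this

theorem IsAcyclic.adj_snd_of_longest (hac : G.IsAcyclic)
    (hmax : ∀ (u v : V) (p : G.Walk u v), p.IsPath → p.length ≤ n)
    {M : G.Subgraph} (hM : M.IsPerfectMatching) {u v : V} {p : G.Walk u v} (hp : p.IsPath)
    (hlen : p.length = n) : M.Adj u p.snd := by
  obtain ⟨w, huw, -⟩ := hM.1 (hM.2 u)
  rwa [← hac.eq_snd_of_adj_start_of_longest hmax hp hlen (M.adj_sub huw)]

theorem IsAcyclic.eq_or_eq_of_adj_snd_of_longest (hac : G.IsAcyclic)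
    (hmax : ∀ (u v : V) (p : G.Walk u v), p.IsPath → p.length ≤ n)
    {M : G.Subgraph} (hM : M.IsPerfectMatching) {a b c d y : V} (hab : G.Adj a b)
    (hbc : G.Adj b c) {r : G.Walk c d} (hp : (Walk.cons hab (.cons hbc r)).IsPath)
    (hlen : (Walk.cons hab (.cons hbc r)).length = n) (hby : G.Adj b y) :
    y = a ∨ y = c := by
  refine or_iff_not_imp_right.mpr fun hyc => ?_
  have hq : (Walk.cons hbc r).IsPath := hp.of_cons
  have hq' : (Walk.cons hby.symm (.cons hbc r)).IsPath :=
    hq.cons fun hmem => hyc (by simpa using hac.eq_snd_of_adj_start hq hby hmem)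
  have hyb : M.Adj y b := hac.adj_snd_of_longest hmax hM hq' (by simpa using hlen)
  exact hM.1.eq_of_adj_right hyb (hac.adj_snd_of_longest hmax hM hp hlen)

theorem Connected.toSubgraph_eq_top_of_forall_adj {u v : V} (hG : G.Connected) (p : G.Walk u v)
    (hp : ∀ x y, x ∈ p.support → G.Adj x y → s(x, y) ∈ p.edges) : p.toSubgraph = ⊤ := by
  have hsupp : ∀ w, w ∈ p.support := by
    intro w
    by_contra hw
    obtain ⟨d, -, hd, hd'⟩ :=
      (hG.preconnected u w).some.exists_boundary_dart {x | x ∈ p.support} p.start_mem_support hw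
    exact hd' (p.snd_mem_support_of_mem_edges (hp _ _ hd d.adj))
  ext x y
  · simpa using hsupp x
  · simp only [Walk.adj_toSubgraph_iff_mem_edges, Subgraph.top_adj]
    exact ⟨fun h => p.adj_of_mem_edges h, hp x y (hsupp x)⟩

theorem Walk.IsPath.nonempty_iso_pathGraph {u v : V} {p : G.Walk u v} (hp : p.IsPath)
    (htop : p.toSubgraph = ⊤) : Nonempty (G ≃g pathGraph (p.length + 1)) := by
  classical
  have e := hp.pathGraphIsoToSubgraph
  rw [htop] at e
  exact ⟨(e.trans Subgraph.topIso).symm⟩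

theorem Subgraph.IsMatching.isPerfectMatching_comap_induce_s7 {M : G.Subgraph}
    (hM : M.IsMatching) : (M.comap (Embedding.induce M.verts).toHom).IsPerfectMatching := by
  refine Subgraph.isPerfectMatching_iff.mpr fun a => ?_
  obtain ⟨w, haw, hw⟩ := hM a.2
  exact ⟨⟨w, M.edge_vert haw.symm⟩, ⟨M.adj_sub haw, haw⟩,
    fun b hb => Subtype.ext (hw b hb.2)⟩

theorem Subgraph.IsPerfectMatching.comap_induce_connectedComponent {M : G.Subgraph}
    (hM : M.IsPerfectMatching) (c : G.ConnectedComponent) :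
    (M.comap (Embedding.induce c.supp).toHom).IsPerfectMatching := by
  refine Subgraph.isPerfectMatching_iff.mpr fun a => ?_
  obtain ⟨w, haw, hw⟩ := hM.1 (hM.2 a)
  exact ⟨⟨w, c.mem_supp_of_adj_mem_supp a.2 (M.adj_sub haw)⟩, ⟨M.adj_sub haw, haw⟩,
    fun b hb => Subtype.ext (hw b hb.2)⟩

theorem IsTree.nonempty_iso_pathGraph_four (hT : G.IsTree) {M : G.Subgraph}
    (hM : M.IsPerfectMatching) (hmax : ∀ (u v : V) (p : G.Walk u v), p.IsPath → p.length ≤ 3)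
    {u v : V} {p : G.Walk u v} (hp : p.IsPath) (hlen : p.length = 3) :
    Nonempty (G ≃g pathGraph 4) := by
  obtain _ | ⟨h01, _ | ⟨h12, _ | ⟨h23, _ | ⟨_, _⟩⟩⟩⟩ := p <;> simp at hlen
  have hp' : (Walk.cons h23.symm (.cons h12.symm (.cons h01.symm .nil))).IsPath := by
    simpa using hp.reverse
  have hac := hT.isAcyclic
  refine hp.nonempty_iso_pathGraph <|
    hT.connected.toSubgraph_eq_top_of_forall_adj _ fun x y hx hxy => ?_
  simp only [Walk.support_cons, Walk.support_nil, List.mem_cons, List.not_mem_nil, or_false] at hx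
  rcases hx with rfl | rfl | rfl | rfl
  · simp [hac.eq_snd_of_adj_start_of_longest hmax hp rfl hxy]
  · rcases hac.eq_or_eq_of_adj_snd_of_longest hmax hM h01 h12 hp rfl hxy with rfl | rfl <;> simp
  · rcases hac.eq_or_eq_of_adj_snd_of_longest hmax hM h23.symm h12.symm hp' rfl hxy
      with rfl | rfl <;> simp
  · simp [hac.eq_snd_of_adj_start_of_longest hmax hp' rfl hxy]

end SimpleGraph

theorem twoP3Free_acyclicMatching_longest_path_four_general {V : Type*}
    (G : SimpleGraph V) (M : G.Subgraph) (hM : M.IsMatching)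
    (hac : (G.induce M.verts).IsAcyclic)
    (c : (G.induce M.verts).ConnectedComponent)
    (hlong : ∃ (u v : c.supp) (p : ((G.induce M.verts).induce c.supp).Walk u v),
        p.IsPath ∧ p.length = 3)
    (hmax : ∀ (u v : c.supp) (p : ((G.induce M.verts).induce c.supp).Walk u v),
        p.IsPath → p.length ≤ 3) :
    Nonempty (((G.induce M.verts).induce c.supp) ≃g pathGraph 4) := by
  obtain ⟨u, v, p, hp, hlen⟩ := hlong
  have hM' := hM.isPerfectMatching_comap_induce_s7.comap_induce_connectedComponent c
  exact (hac.isTree_connectedComponent c).nonempty_iso_pathGraph_four hM' hmax hp hlen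

/-- If `G` is a finite simple `2P₃`-free graph, `M` is an acyclic
matching in `G`, and `T` is a connected component of `G(M)` that is not isomorphic
to `K₂` and in which a longest path has exactly `4` vertices (there is a path on `4`
vertices, i.e. of length `3`, and every path has length at most `3`), then `T` is
isomorphic to the path `P₄` on four vertices. -/
theorem twoP3Free_acyclicMatching_longest_path_four {V : Type*} [Fintype V]
    (G : SimpleGraph V) (hfree : TwoP3Free G) (M : G.Subgraph) (hM : M.IsMatching)
    (hac : (G.induce M.verts).IsAcyclic)
    (c : (G.induce M.verts).ConnectedComponent)
    (hc : ¬ Nonempty (((G.induce M.verts).induce c.supp) ≃g (⊤ : SimpleGraph (Fin 2))))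
    (hlong : ∃ (u v : c.supp) (p : ((G.induce M.verts).induce c.supp).Walk u v),
        p.IsPath ∧ p.length = 3)
    (hmax : ∀ (u v : c.supp) (p : ((G.induce M.verts).induce c.supp).Walk u v),
        p.IsPath → p.length ≤ 3) :
    Nonempty (((G.induce M.verts).induce c.supp) ≃g pathGraph 4) :=
  twoP3Free_acyclicMatching_longest_path_four_general G M hM hac c hlong hmax
end

section
/- If G is a finite simple P_5-free graph (containing no induced path on five vertices) and M is an acyclic matching in G, then every connected component of G(M) is isomorphic to the path P_2 on two vertices or to the path P_4 on four vertices; that is, G(M) is a disjoint union of P_4's and K_2's. -/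
/-! In a forest every path is induced, so a `P₅`-free forest has no path on five vertices; and
since a non-backtracking walk in a forest is a path, no walk `a b c d e` with `a ≠ c`, `b ≠ d`,
`c ≠ e` exists. Let `m` send each vertex to its matching partner. If `v` had two neighbours
`a ≠ b` other than `m v`, the walk `m a, a, v, b, m b` would be such a walk, so every vertex has
at most one neighbour besides its partner. Hence a component is either the edge `v, m v`, or it
contains a path `v, m v, u, m u`; then `m v` and `u` already have their one extra neighbour, and a
further neighbour of `v` or of `m u` would extend the path to a forbidden walk. -/

open SimpleGraph

/-- A graph `G` is *P₅-free* if it contains no induced subgraph isomorphic to the path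
on five vertices.  (Graph embeddings `↪g` are exactly induced-subgraph copies.) -/
def P5Free {V : Type*} (G : SimpleGraph V) : Prop :=
  IsEmpty (pathGraph 5 ↪g G)

namespace SimpleGraph

variable {V : Type*} {G : SimpleGraph V} {u v : V}

theorem IsAcyclic.eq_add_one_of_adj_getVert (hG : G.IsAcyclic) {p : G.Walk u v} (hp : p.IsPath)
    {i j : ℕ} (hij : i < j) (hj : j ≤ p.length) (h : G.Adj (p.getVert i) (p.getVert j)) :
    j = i + 1 := by
  have hmem : p.getVert j ∈ (p.drop i).support := by
    simpa [Walk.drop_getVert, Nat.add_sub_cancel' hij.le] using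
      (p.drop i).getVert_mem_support (j - i)
  have hsnd : p.getVert j = p.getVert (i + 1) := by
    simpa [Walk.drop_getVert] using hG.eq_snd_of_adj_start (hp.drop i) h hmem
  exact hp.getVert_injOn hj (by simp; omega) hsnd

theorem IsAcyclic.adj_getVert_iff (hG : G.IsAcyclic) {p : G.Walk u v} (hp : p.IsPath)
    {i j : ℕ} (hi : i ≤ p.length) (hj : j ≤ p.length) :
    G.Adj (p.getVert i) (p.getVert j) ↔ i + 1 = j ∨ j + 1 = i := by
  refine ⟨fun h ↦ ?_, ?_⟩
  · rcases lt_trichotomy i j with hij | rfl | hij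
    · exact .inl (hG.eq_add_one_of_adj_getVert hp hij hj h).symm
    · exact (h.ne rfl).elim
    · exact .inr (hG.eq_add_one_of_adj_getVert hp hij hi h.symm).symm
  · rintro (rfl | rfl)
    · exact p.adj_getVert_succ (by omega)
    · exact (p.adj_getVert_succ (by omega)).symm

def IsAcyclic.pathGraphEmbedding (hG : G.IsAcyclic) {p : G.Walk u v} (hp : p.IsPath) :
    pathGraph (p.length + 1) ↪g G where
  toFun i := p.getVert i
  inj' i j h := Fin.ext (hp.getVert_injOn (by simp; omega) (by simp; omega) h)
  map_rel_iff' {i j} := by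
    rw [pathGraph_adj]
    exact hG.adj_getVert_iff hp (by omega) (by omega)

theorem IsAcyclic.range_pathGraphEmbedding (hG : G.IsAcyclic) {p : G.Walk u v}
    (hp : p.IsPath) : Set.range (hG.pathGraphEmbedding hp) = {x | x ∈ p.support} := by
  ext x
  simp only [Set.mem_range, Set.mem_ofPred_eq, Walk.mem_support_iff_exists_getVert]
  constructor
  · rintro ⟨i, rfl⟩
    exact ⟨i, rfl, by omega⟩
  · rintro ⟨n, rfl, hn⟩
    exact ⟨⟨n, by omega⟩, rfl⟩

theorem ConnectedComponent.supp_subset_of_forall_adj {s : Set V}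
    (hs : ∀ x ∈ s, ∀ y, G.Adj x y → y ∈ s) (hv : v ∈ s) :
    (G.connectedComponentMk v).supp ⊆ s := by
  have hwalk : ∀ {a b : V} (p : G.Walk a b), a ∈ s → b ∈ s := by
    intro a b p
    induction p with
    | nil => exact id
    | cons h _ ih => exact fun ha ↦ ih (hs _ ha _ h)
  intro y hy
  obtain ⟨p⟩ := ConnectedComponent.exact hy
  exact hwalk p.reverse hv

theorem IsAcyclic.nonempty_iso_pathGraph_of_isPath (hG : G.IsAcyclic) {p : G.Walk u v}
    (hp : p.IsPath) (hclosed : ∀ x ∈ p.support, ∀ y, G.Adj x y → y ∈ p.support) :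
    Nonempty (G.induce (G.connectedComponentMk u).supp ≃g pathGraph (p.length + 1)) := by
  classical
  have hsupp : (G.connectedComponentMk u).supp = Set.range (hG.pathGraphEmbedding hp) := by
    rw [hG.range_pathGraphEmbedding hp]
    refine (ConnectedComponent.supp_subset_of_forall_adj hclosed p.start_mem_support).antisymm ?_
    intro x hx
    exact ConnectedComponent.sound (p.takeUntil x hx).reachable.symm
  rw [hsupp]
  exact ⟨(hG.pathGraphEmbedding hp).isoInduceRange.symm⟩

end SimpleGraph

theorem P5Free.of_embedding {V W : Type*} {G : SimpleGraph V} {H : SimpleGraph W}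
    (hG : P5Free G) (f : H ↪g G) : P5Free H :=
  ⟨fun e ↦ hG.false (f.comp e)⟩

section

variable {V : Type*} {G : SimpleGraph V}

theorem P5Free.length_lt_four_of_isPath (hfree : P5Free G) (hG : G.IsAcyclic) {u v : V}
    {p : G.Walk u v} (hp : p.IsPath) : p.length < 4 := by
  by_contra! h
  have e := hG.pathGraphEmbedding (hp.take 4)
  rw [Walk.take_length, min_eq_left h] at e
  exact hfree.false e

theorem P5Free.false_of_adj_chain (hfree : P5Free G) (hG : G.IsAcyclic) {a b c d e : V}
    (hab : G.Adj a b) (hbc : G.Adj b c) (hcd : G.Adj c d) (hde : G.Adj d e)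
    (hac : a ≠ c) (hbd : b ≠ d) (hce : c ≠ e) : False := by
  let p : G.Walk a e := .cons hab (.cons hbc (.cons hcd (.cons hde .nil)))
  have hp : p.IsPath :=
    (hG.isPath_iff_isChain p).2 (by simp [p, hab.ne, hbc.ne, hcd.ne, hac, hbd, hce])
  exact (hfree.length_lt_four_of_isPath hG hp).ne rfl

variable {m : V → V}

theorem P5Free.eq_of_adj_of_ne_partner (hfree : P5Free G) (hG : G.IsAcyclic)
    (hm : ∀ v, G.Adj v (m v)) (hinv : Function.Involutive m) {v a b : V}
    (ha : G.Adj v a) (hb : G.Adj v b) (ha' : a ≠ m v) (hb' : b ≠ m v) : a = b := by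
  by_contra hab
  refine hfree.false_of_adj_chain hG (hm a).symm ha.symm hb (hm b) ?_ hab ?_
  · rintro rfl
    exact ha' (hinv a).symm
  · rintro rfl
    exact hb' (hinv b).symm

theorem P5Free.nonempty_iso_pathGraph_four (hfree : P5Free G) (hG : G.IsAcyclic)
    (hm : ∀ v, G.Adj v (m v)) (hinv : Function.Involutive m) {v₀ u : V}
    (hu : G.Adj (m v₀) u) (huv : u ≠ v₀) :
    Nonempty (G.induce (G.connectedComponentMk v₀).supp ≃g pathGraph 4) := by
  have hmuv : m v₀ ≠ m u := hinv.injective.ne huv.symm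
  let p : G.Walk v₀ (m u) := .cons (hm v₀) (.cons hu (.cons (hm u) .nil))
  have hp : p.IsPath :=
    (hG.isPath_iff_isChain p).2 (by simp [p, huv.symm, hmuv, (hm v₀).ne, hu.ne])
  refine hG.nonempty_iso_pathGraph_of_isPath hp ?_
  intro x hx y hxy
  simp only [p, Walk.support_cons, Walk.support_nil, List.mem_cons, List.not_mem_nil,
    or_false] at hx ⊢
  rcases hx with rfl | rfl | rfl | rfl
  · by_contra! hy
    exact hfree.false_of_adj_chain hG hxy.symm (hm x) hu (hm u) hy.2.1 huv.symm hmuv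
  · by_contra! hy
    exact hy.2.2.1 (hfree.eq_of_adj_of_ne_partner hG hm hinv hu hxy (by rwa [hinv])
      (by rw [hinv]; exact hy.1)).symm
  · by_contra! hy
    exact hy.2.1 (hfree.eq_of_adj_of_ne_partner hG hm hinv hu.symm hxy hmuv hy.2.2.2).symm
  · by_contra! hy
    exact hfree.false_of_adj_chain hG hxy.symm (hm u).symm hu.symm (hm v₀).symm hy.2.2.1
      hmuv.symm huv

theorem P5Free.nonempty_iso_pathGraph_two_or_four (hfree : P5Free G) (hG : G.IsAcyclic)
    (hm : ∀ v, G.Adj v (m v)) (hinv : Function.Involutive m) (v₀ : V) :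
    Nonempty (G.induce (G.connectedComponentMk v₀).supp ≃g pathGraph 2) ∨
      Nonempty (G.induce (G.connectedComponentMk v₀).supp ≃g pathGraph 4) := by
  by_cases hA : ∃ u, G.Adj (m v₀) u ∧ u ≠ v₀
  · obtain ⟨u, hu, huv⟩ := hA
    exact .inr (hfree.nonempty_iso_pathGraph_four hG hm hinv hu huv)
  by_cases hB : ∃ u, G.Adj v₀ u ∧ u ≠ m v₀
  · obtain ⟨u, hu, huv⟩ := hB
    rw [ConnectedComponent.connectedComponentMk_eq_of_adj (hm v₀)]
    exact .inr (hfree.nonempty_iso_pathGraph_four hG hm hinv (by rwa [hinv]) huv)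
  push Not at hA hB
  let p : G.Walk v₀ (m v₀) := .cons (hm v₀) .nil
  refine .inl (hG.nonempty_iso_pathGraph_of_isPath (p := p) (by simp [p, (hm v₀).ne]) ?_)
  intro x hx y hxy
  simp only [p, Walk.support_cons, Walk.support_nil, List.mem_cons, List.not_mem_nil,
    or_false] at hx ⊢
  rcases hx with rfl | rfl
  · exact .inr (hB y hxy)
  · exact .inl (hA y hxy)

end

theorem SimpleGraph.Subgraph.IsMatching.exists_involutive_adj {V : Type*} {G : SimpleGraph V}
    {M : G.Subgraph} (hM : M.IsMatching) :
    ∃ m : M.verts → M.verts,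
      (∀ v, (G.induce M.verts).Adj v (m v)) ∧ Function.Involutive m := by
  choose m hm hunique using fun v : M.verts ↦ hM v.2
  refine ⟨fun v ↦ ⟨m v, M.edge_vert (hm v).symm⟩, fun v ↦ M.adj_sub (hm v), fun v ↦ ?_⟩
  exact Subtype.ext (hunique _ _ (hm v).symm).symm

theorem p5Free_acyclicMatching_components_general {V : Type*}
    (G : SimpleGraph V) (hfree : P5Free G) (M : G.Subgraph) (hM : M.IsMatching)
    (hac : (G.induce M.verts).IsAcyclic) :
    ∀ c : (G.induce M.verts).ConnectedComponent,
      Nonempty (((G.induce M.verts).induce c.supp) ≃g pathGraph 2) ∨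
      Nonempty (((G.induce M.verts).induce c.supp) ≃g pathGraph 4) := by
  obtain ⟨m, hm, hinv⟩ := hM.exists_involutive_adj
  intro c
  obtain ⟨v, rfl⟩ := c.exists_rep
  exact (hfree.of_embedding (Embedding.induce M.verts)).nonempty_iso_pathGraph_two_or_four
    hac hm hinv v

/-- If `G` is a finite simple `P₅`-free graph and `M` is an acyclic
matching in `G`, then every connected component of `G(M)` is isomorphic to `K₂`
(the path on two vertices) or to the path `P₄` on four vertices. -/
theorem p5Free_acyclicMatching_components {V : Type*} [Fintype V]
    (G : SimpleGraph V) (hfree : P5Free G) (M : G.Subgraph) (hM : M.IsMatching)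
    (hac : (G.induce M.verts).IsAcyclic) :
    ∀ c : (G.induce M.verts).ConnectedComponent,
      Nonempty (((G.induce M.verts).induce c.supp) ≃g pathGraph 2) ∨
      Nonempty (((G.induce M.verts).induce c.supp) ≃g pathGraph 4) :=
  p5Free_acyclicMatching_components_general G hfree M hM hac
end

section
/- If every connected component of a finite simple graph G is a tree or an odd cycle, then every maximum matching of G is acyclic, i.e., for every maximum matching M of G the induced subgraph G(M) is a forest. -/
open SimpleGraph

section Aux

variable {V : Type*} {G : SimpleGraph V}

/-- Lift a walk of `G` whose support lies in `s` to a walk of `G.induce s`. -/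
lemma lift_walk {s : Set V} :
    ∀ {u v : V} (p : G.Walk u v) (hp : ∀ w ∈ p.support, w ∈ s),
      ∃ q : (G.induce s).Walk ⟨u, hp u p.start_mem_support⟩ ⟨v, hp v p.end_mem_support⟩,
        q.map (Embedding.induce s).toHom = p := by
  intro u v p
  induction p with
  | nil => exact fun hp => ⟨.nil, rfl⟩
  | @cons u x v h p ih =>
    intro hp
    obtain ⟨q, hq⟩ := ih (fun w hw => hp w (by simp [hw]))
    refine ⟨.cons (by simpa using h) q, ?_⟩
    rw [Walk.map_cons, hq]; rfl

lemma mem_support_iff_mem_tail {v : V} (c : G.Walk v v) (hc : ¬c.Nil) {x : V} :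
    x ∈ c.support ↔ x ∈ c.support.tail := by
  constructor
  · intro hx
    rw [c.support_eq_cons, List.mem_cons] at hx
    rcases hx with rfl | hx
    · rw [← Walk.support_tail_of_not_nil c hc]
      exact c.tail.end_mem_support
    · exact hx
  · exact fun hx => List.mem_of_mem_tail hx

lemma mem_support_rotate [DecidableEq V] {u v : V} (c : G.Walk v v) (hc : c.IsCycle)
    (h : u ∈ c.support) {x : V} : x ∈ (c.rotate u h).support ↔ x ∈ c.support := by
  rw [mem_support_iff_mem_tail _ (hc.rotate h).not_nil,
    mem_support_iff_mem_tail _ hc.not_nil]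
  exact (Walk.support_rotate c u h).perm.mem_iff

end Aux

open Fin.CommRing Fin.NatCast

lemma cycle_nbrs_mem_support {n : ℕ} [NeZero n] (hn : 3 ≤ n) {w : Fin n}
    {q : (cycleGraph n).Walk w w} (hq : q.IsCycle) :
    w + 1 ∈ q.support ∧ w - 1 ∈ q.support := by
  cases q with
  | nil => exact absurd hq Walk.IsCycle.not_of_nil
  | @cons _ b _ h r =>
    have hlen : 2 ≤ r.length := by
      have h3 := hq.three_le_length
      simpa using h3
    rw [Walk.cons_isCycle_iff] at hq
    obtain ⟨hr, he⟩ := hq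
    have haw : (cycleGraph n).Adj (r.getVert (r.length - 1)) w := by
      have := r.adj_getVert_succ (i := r.length - 1) (by omega)
      rwa [Nat.sub_add_cancel (by omega), r.getVert_length] at this
    have haedge : s(r.getVert (r.length - 1), w) ∈ r.edges := by
      have := r.toSubgraph_adj_getVert (i := r.length - 1) (by omega)
      rw [Nat.sub_add_cancel (by omega), r.getVert_length] at this
      exact (r.mem_edges_toSubgraph.mp (Subgraph.mem_edgeSet.mpr this))
    have hba : b ≠ r.getVert (r.length - 1) := by
      intro heq
      apply he
      have hswap : s(w, b) = s(r.getVert (r.length - 1), w) := by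
        rw [Sym2.eq_swap]
        exact congrArg (fun x => s(x, w)) heq
      rw [hswap]
      exact haedge
    have hbsupp : b ∈ (Walk.cons h r).support := by simp [r.start_mem_support]
    have hasupp : r.getVert (r.length - 1) ∈ (Walk.cons h r).support := by
      simp only [Walk.support_cons, List.mem_cons]
      exact Or.inr (Walk.mem_support_iff_exists_getVert.mpr ⟨r.length - 1, rfl, by omega⟩)
    have hone : (1 : Fin n).val = 1 := by
      rw [Fin.val_one']; exact Nat.mod_eq_of_lt (by omega)
    have hb : b = w - 1 ∨ b = w + 1 := by
      rcases cycleGraph_adj'.mp h with h1 | h1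
      · left
        have h2 : w - b = 1 := Fin.ext (by rw [h1, hone])
        rw [← h2]; ring
      · right
        have h2 : b - w = 1 := Fin.ext (by rw [h1, hone])
        rw [← h2]; ring
    have hA : r.getVert (r.length - 1) = w - 1 ∨ r.getVert (r.length - 1) = w + 1 := by
      rcases cycleGraph_adj'.mp haw with h1 | h1
      · right
        have h2 : r.getVert (r.length - 1) - w = 1 := Fin.ext (by rw [h1, hone])
        rw [← h2]; ring
      · left
        have h2 : w - r.getVert (r.length - 1) = 1 := Fin.ext (by rw [h1, hone])
        rw [← h2]; ring
    rcases hb with hb | hb <;> rcases hA with hA | hA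
    · exact absurd (hb.trans hA.symm) hba
    · exact ⟨hA ▸ hasupp, hb ▸ hbsupp⟩
    · exact ⟨hb ▸ hbsupp, hA ▸ hasupp⟩
    · exact absurd (hb.trans hA.symm) hba

/-- Any cycle in `cycleGraph n` visits every vertex. -/
lemma cycle_support_univ {n : ℕ} [NeZero n] (hn : 3 ≤ n) {v : Fin n}
    {p : (cycleGraph n).Walk v v} (hp : p.IsCycle) (x : Fin n) : x ∈ p.support := by
  have key : ∀ w ∈ p.support, w + 1 ∈ p.support := by
    intro w hw
    have hq := hp.rotate hw
    have h1 := (cycle_nbrs_mem_support hn hq).1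
    rwa [mem_support_rotate p hp hw] at h1
  have h2 : ∀ k : ℕ, v + (k : Fin n) ∈ p.support := by
    intro k
    induction k with
    | zero => simpa using p.start_mem_support
    | succ k ih =>
      have h3 := key _ ih
      have h4 : v + ((k + 1 : ℕ) : Fin n) = v + (k : Fin n) + 1 := by
        push_cast
        ring
      rwa [h4]
  have h5 := h2 (x - v).val
  have h6 : v + (x - v) = x := by ring
  rwa [Fin.cast_val_eq_self, h6] at h5

/-- If every connected component of a finite simple graph `G` is a
tree or an odd cycle, then every maximum matching `M` of `G` is acyclic, i.e. the
induced subgraph `G(M)` is a forest. -/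
theorem maximumMatching_acyclic_of_components {V : Type*} [Fintype V] (G : SimpleGraph V)
    (hcomp : ∀ c : G.ConnectedComponent,
      (G.induce c.supp).IsTree ∨
        ∃ n : ℕ, Odd n ∧ 3 ≤ n ∧ Nonempty ((G.induce c.supp) ≃g cycleGraph n)) :
    ∀ M : G.Subgraph, IsMaximumMatching G M → (G.induce M.verts).IsAcyclic := by
  classical
  rintro M ⟨hM, -⟩ v p hp
  -- map the cycle into `G`
  have hinj : Function.Injective (Embedding.induce (G := G) M.verts).toHom := Subtype.val_injective
  set q : G.Walk (v : V) (v : V) := p.map (Embedding.induce (G := G) M.verts).toHom with hqdef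
  have hq : q.IsCycle := hp.map hinj
  -- all vertices of `q` are in `M.verts`
  have hqM : ∀ w ∈ q.support, w ∈ M.verts := by
    intro w hw
    change w ∈ (p.map (Embedding.induce (G := G) M.verts).toHom).support at hw
    rw [Walk.support_map, List.mem_map] at hw
    obtain ⟨y, -, rfl⟩ := hw
    exact y.2
  -- all vertices of `q` are in the component of `v`
  set c : G.ConnectedComponent := G.connectedComponentMk (v : V) with hcdef
  have hqc : ∀ w ∈ q.support, w ∈ c.supp := by
    intro w hw
    have hreach : G.Reachable w (v : V) := ((q.takeUntil w hw).reverse).reachable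
    exact ConnectedComponent.sound hreach
  -- lift `q` to the induced graph on the component
  obtain ⟨r, hr⟩ := lift_walk q hqc
  have hrc : r.IsCycle := by
    have hinj' : Function.Injective (Embedding.induce (G := G) c.supp).toHom := Subtype.val_injective
    rw [← Walk.map_isCycle_iff_of_injective (p := r) hinj', hr]
    exact hq
  rcases hcomp c with ht | ⟨n, hodd, hn3, ⟨φ⟩⟩
  · exact ht.IsAcyclic r hrc
  · haveI : NeZero n := ⟨by omega⟩
    have hφinj : Function.Injective φ.toHom := φ.toEquiv.injective
    have hsc : (r.map φ.toHom).IsCycle := hrc.map hφinj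
    -- the component is contained in `M.verts`
    have hsub : c.supp ⊆ M.verts := by
      intro w hw
      have h1 : φ.toHom ⟨w, hw⟩ ∈ (r.map φ.toHom).support :=
        cycle_support_univ hn3 hsc _
      rw [Walk.support_map, List.mem_map] at h1
      obtain ⟨y, hy, hyw⟩ := h1
      have hyw' : y = ⟨w, hw⟩ := hφinj hyw
      subst hyw'
      have h2 : w ∈ q.support := by
        rw [← hr]
        change w ∈ (r.map (Embedding.induce (G := G) c.supp).toHom).support
        rw [Walk.support_map, List.mem_map]
        exact ⟨⟨w, hw⟩, hy, rfl⟩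
      exact hqM w h2
    -- parity contradiction
    have hM' : (M.induce c.supp).IsMatching := by
      have := hM.induce_connectedComponent c
      rwa [Set.inter_eq_self_of_subset_right hsub] at this
    haveI : Fintype ↥(M.induce c.supp).verts := Fintype.ofFinite _
    have heven := hM'.even_card
    have hcard : (M.induce c.supp).verts.toFinset.card = n := by
      rw [Set.toFinset_card]
      have : (M.induce c.supp).verts = c.supp := rfl
      rw [show Fintype.card ↥(M.induce c.supp).verts = Fintype.card ↥c.supp from
        Fintype.card_congr (Equiv.cast (by rw [this]))]
      rw [Fintype.card_congr φ.toEquiv, Fintype.card_fin]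
    rw [hcard] at heven
    exact (Nat.not_even_iff_odd.mpr hodd) heven
end
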